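/- arXiv:2303.16078 — 2 statements merged into one kernel-verified Lean document; each statement's English description precedes it below -/
import Mathlib

section
/- Suppose two cameras with centers C¹, C² observe affinely independent 3D points X_i, X_j, X_k, with image projections x_i¹, x_j¹, x_k¹ in camera 1 and x_i², x_j², x_k² in camera 2 (all with positive depths). Let m¹ be the centroid of x_i¹, x_j¹, x_k¹ and let E be an essential (fundamental) matrix satisfying (x_l²)ᵀ E x_l¹ = 0 for all l ∈ {i,j,k} and consistent with the two camera poses. Then the epipolar line E m¹ in the second image intersects the closed triangle with vertices x_i², x_j², x_k²; i.e., there exists a point p in the convex hull of {x_i², x_j², x_k²} with pᵀ E m¹ = 0. -/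
/-!
The vertices `x_l² = e_l⁻¹ • (R X_l + t)` (with `e_l, d_l` the depths of `X_l` in the two cameras)
span a cone containing `q = ∑ d_l⁻¹ • (R X_l + t) = 3 • R m¹ + (∑ d_l⁻¹) • t`, with the positive
weights `e_l / d_l`. Since `E m¹ = t ⨯₃ R m¹` is orthogonal to both `R m¹` and `t`, the point `q`
lies on the epipolar line, hence so does its normalisation, which is a convex combination of the
`x_l²`.
-/

open Matrix

theorem skewMatrix_mulVec {K : Type*} [CommRing K] (t w : Fin 3 → K) :
    !![0, -t 2, t 1; t 2, 0, -t 0; -t 1, t 0, 0] *ᵥ w = t ⨯₃ w := by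
  ext i
  fin_cases i <;> simp [cross_apply, mulVec, dotProduct, Fin.sum_univ_three] <;> ring

theorem add_dotProduct_essential_mulVec_eq_zero {K : Type*} [CommRing K]
    (R : Matrix (Fin 3) (Fin 3) K) (t m : Fin 3 → K) (a b : K) :
    (a • R *ᵥ m + b • t) ⬝ᵥ (!![0, -t 2, t 1; t 2, 0, -t 0; -t 1, t 0, 0] * R) *ᵥ m = 0 := by
  rw [← mulVec_mulVec, skewMatrix_mulVec, add_dotProduct, smul_dotProduct, smul_dotProduct,
    dot_cross_self, dot_self_cross, smul_zero, smul_zero, add_zero]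

theorem inv_smul_add_smul_add_smul_mem_convexHull {V : Type*} [AddCommGroup V] [Module ℝ V]
    {a b c : ℝ} (ha : 0 ≤ a) (hb : 0 ≤ b) (hc : 0 ≤ c) (habc : 0 < a + b + c) (x y z : V) :
    (a + b + c)⁻¹ • (a • x + b • y + c • z) ∈ convexHull ℝ {x, y, z} := by
  have := Finset.univ.centerMass_mem_convexHull (w := ![a, b, c]) (z := ![x, y, z])
    (s := {x, y, z}) (by simp [Fin.forall_fin_succ, ha, hb, hc])
    (by simpa [Fin.sum_univ_three] using habc) (by simp [Fin.forall_fin_succ])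
  simpa [Finset.centerMass, Fin.sum_univ_three, add_assoc] using this

theorem div_smul_inv_smul {V : Type*} [AddCommGroup V] [Module ℝ V] {e : ℝ} (he : e ≠ 0)
    (d : ℝ) (u : V) : (e / d) • (e⁻¹ • u) = d⁻¹ • u := by
  rw [smul_smul, div_mul_eq_mul_div, mul_inv_cancel₀ he, one_div]

open Matrix in
theorem stmt_2_general
    (R : Matrix (Fin 3) (Fin 3) ℝ) (t : Fin 3 → ℝ)
    (Xi Xj Xk : Fin 3 → ℝ)
    (hdi : 0 < Xi 2) (hdj : 0 < Xj 2) (hdk : 0 < Xk 2)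
    (hdi2 : 0 < (R.mulVec Xi + t) 2) (hdj2 : 0 < (R.mulVec Xj + t) 2)
    (hdk2 : 0 < (R.mulVec Xk + t) 2)
    (E : Matrix (Fin 3) (Fin 3) ℝ)
    (hE : E = !![0, -t 2, t 1; t 2, 0, -t 0; -t 1, t 0, 0] * R)
    (m1 : Fin 3 → ℝ)
    (hm1 : m1 = (1/3 : ℝ) • ((Xi 2)⁻¹ • Xi + (Xj 2)⁻¹ • Xj + (Xk 2)⁻¹ • Xk)) :
    ∃ p ∈ convexHull ℝ {((R.mulVec Xi + t) 2)⁻¹ • (R.mulVec Xi + t),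
                        ((R.mulVec Xj + t) 2)⁻¹ • (R.mulVec Xj + t),
                        ((R.mulVec Xk + t) 2)⁻¹ • (R.mulVec Xk + t)},
      p ⬝ᵥ E.mulVec m1 = 0 := by
  have hwi := div_pos hdi2 hdi
  have hwj := div_pos hdj2 hdj
  have hwk := div_pos hdk2 hdk
  refine ⟨_, inv_smul_add_smul_add_smul_mem_convexHull hwi.le hwj.le hwk.le (by positivity)
    _ _ _, ?_⟩
  have hq : (Xi 2)⁻¹ • (R *ᵥ Xi + t) + (Xj 2)⁻¹ • (R *ᵥ Xj + t) + (Xk 2)⁻¹ • (R *ᵥ Xk + t)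
      = (3 : ℝ) • R *ᵥ m1 + ((Xi 2)⁻¹ + (Xj 2)⁻¹ + (Xk 2)⁻¹) • t := by
    rw [hm1, mulVec_smul, mulVec_add, mulVec_add, mulVec_smul, mulVec_smul, mulVec_smul]
    module
  rw [div_smul_inv_smul hdi2.ne', div_smul_inv_smul hdj2.ne', div_smul_inv_smul hdk2.ne', hq,
    smul_dotProduct, hE, add_dotProduct_essential_mulVec_eq_zero, smul_zero]

open Matrix in
/-- The epipolar line of the centroid `m¹` intersects the closed triangle of the
projections in the second image. -/
theorem stmt_2
    (R : Matrix (Fin 3) (Fin 3) ℝ) (t : Fin 3 → ℝ)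
    (hR : R.transpose * R = 1 ∧ R.det = 1)
    (Xi Xj Xk : Fin 3 → ℝ)
    (hdi : 0 < Xi 2) (hdj : 0 < Xj 2) (hdk : 0 < Xk 2)
    (hdi2 : 0 < (R.mulVec Xi + t) 2) (hdj2 : 0 < (R.mulVec Xj + t) 2)
    (hdk2 : 0 < (R.mulVec Xk + t) 2)
    (E : Matrix (Fin 3) (Fin 3) ℝ)
    (hE : E = !![0, -t 2, t 1; t 2, 0, -t 0; -t 1, t 0, 0] * R)
    (m1 : Fin 3 → ℝ)
    (hm1 : m1 = (1/3 : ℝ) • ((Xi 2)⁻¹ • Xi + (Xj 2)⁻¹ • Xj + (Xk 2)⁻¹ • Xk)) :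
    ∃ p ∈ convexHull ℝ {((R.mulVec Xi + t) 2)⁻¹ • (R.mulVec Xi + t),
                        ((R.mulVec Xj + t) 2)⁻¹ • (R.mulVec Xj + t),
                        ((R.mulVec Xk + t) 2)⁻¹ • (R.mulVec Xk + t)},
      p ⬝ᵥ E.mulVec m1 = 0 :=
  stmt_2_general R t Xi Xj Xk hdi hdj hdk hdi2 hdj2 hdk2 E hE m1 hm1
end

section
/- If m¹ is the centroid of three points x_i¹, x_j¹, x_k¹ in ℝ² and these are the projections (with positive depths d_i, d_j, d_k) of 3D points X_i, X_j, X_k under the canonical camera [I|0], then the ray from the origin (camera center) through the lifted point (m¹, 1) intersects the plane through X_i, X_j, X_k at a point M that is a convex combination of X_i, X_j, X_k with weights proportional to 1/3 · d_l · s, hence M lies in the closed triangle conv{X_i, X_j, X_k}. -/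
/-!
A point `X` of positive depth `d = X 2` is `d` times the lift `(x, 1)` of its projection `x`.
Hence three times the lifted centroid of the projections is `Xi / di + Xj / dj + Xk / dk`,
a combination of the three points with positive coefficients; dividing by their sum
`1 / di + 1 / dj + 1 / dk` turns it into a convex combination, i.e. a point of the ray that
lies in the triangle.
-/

def homogenize (x : Fin 2 → ℝ) : Fin 3 → ℝ := ![x 0, x 1, 1]

lemma homogenize_centroid (x y z : Fin 2 → ℝ) :
    homogenize ((1 / 3 : ℝ) • (x + y + z)) =
      (1 / 3 : ℝ) • (homogenize x + homogenize y + homogenize z) := by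
  ext l
  fin_cases l <;> norm_num [homogenize]

lemma homogenize_projection (X : Fin 3 → ℝ) (hX : X 2 ≠ 0) :
    homogenize ![X 0 / X 2, X 1 / X 2] = (X 2)⁻¹ • X := by
  ext l
  fin_cases l <;> simp [homogenize, div_eq_inv_mul, hX]

lemma exists_convex_combination_of_pos_combination {E : Type*} [AddCommGroup E] [Module ℝ E]
    (u v w : E) {α β γ : ℝ} (hα : 0 < α) (hβ : 0 < β) (hγ : 0 < γ) :
    ∃ s : ℝ, 0 < s ∧ ∃ a b c : ℝ, 0 ≤ a ∧ 0 ≤ b ∧ 0 ≤ c ∧ a + b + c = 1 ∧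
      s • (α • u + β • v + γ • w) = a • u + b • v + c • w := by
  have hsum : 0 < α + β + γ := by positivity
  refine ⟨(α + β + γ)⁻¹, inv_pos.2 hsum, α / (α + β + γ), β / (α + β + γ), γ / (α + β + γ),
    by positivity, by positivity, by positivity, by field_simp, ?_⟩
  simp only [smul_add, smul_smul, div_eq_inv_mul]

theorem stmt_10_general
    (Xi Xj Xk : Fin 3 → ℝ)
    (hdi : 0 < Xi 2) (hdj : 0 < Xj 2) (hdk : 0 < Xk 2)
    (xi xj xk m : Fin 2 → ℝ)
    (hxi : xi = ![Xi 0 / Xi 2, Xi 1 / Xi 2])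
    (hxj : xj = ![Xj 0 / Xj 2, Xj 1 / Xj 2])
    (hxk : xk = ![Xk 0 / Xk 2, Xk 1 / Xk 2])
    (hm : m = (1/3 : ℝ) • (xi + xj + xk)) :
    ∃ s : ℝ, 0 < s ∧ ∃ a b c : ℝ, 0 ≤ a ∧ 0 ≤ b ∧ 0 ≤ c ∧ a + b + c = 1 ∧
      s • ![m 0, m 1, 1] = a • Xi + b • Xj + c • Xk := by
  have hlift : homogenize m =
      (1 / 3 : ℝ) • ((Xi 2)⁻¹ • Xi + (Xj 2)⁻¹ • Xj + (Xk 2)⁻¹ • Xk) := by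
    rw [hm, homogenize_centroid, hxi, hxj, hxk, homogenize_projection Xi hdi.ne',
      homogenize_projection Xj hdj.ne', homogenize_projection Xk hdk.ne']
  obtain ⟨s, hs, a, b, c, ha, hb, hc, habc, hcomb⟩ :=
    exists_convex_combination_of_pos_combination Xi Xj Xk
      (inv_pos.2 hdi) (inv_pos.2 hdj) (inv_pos.2 hdk)
  refine ⟨3 * s, by positivity, a, b, c, ha, hb, hc, habc, ?_⟩
  change (3 * s) • homogenize m = _
  rw [hlift, smul_smul, ← hcomb]
  congr 1
  ring

/-- The ray from the origin through the lifted centroid of the projections meets the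
triangle `conv{Xi, Xj, Xk}`. -/
theorem stmt_10
    (Xi Xj Xk : Fin 3 → ℝ)
    (hdi : 0 < Xi 2) (hdj : 0 < Xj 2) (hdk : 0 < Xk 2)
    (xi xj xk m : Fin 2 → ℝ)
    (hxi : xi = ![Xi 0 / Xi 2, Xi 1 / Xi 2])
    (hxj : xj = ![Xj 0 / Xj 2, Xj 1 / Xj 2])
    (hxk : xk = ![Xk 0 / Xk 2, Xk 1 / Xk 2])
    (hm : m = (1/3 : ℝ) • (xi + xj + xk))
    (hA : AffineIndependent ℝ ![Xi, Xj, Xk])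
    (h0 : (0 : Fin 3 → ℝ) ∉ affineSpan ℝ ({Xi, Xj, Xk} : Set (Fin 3 → ℝ))) :
    ∃ s : ℝ, 0 < s ∧ ∃ a b c : ℝ, 0 ≤ a ∧ 0 ≤ b ∧ 0 ≤ c ∧ a + b + c = 1 ∧
      s • ![m 0, m 1, 1] = a • Xi + b • Xj + c • Xk :=
  stmt_10_general Xi Xj Xk hdi hdj hdk xi xj xk m hxi hxj hxk hm
end
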